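/- arXiv:2102.11768 — 2 statements merged into one kernel-verified Lean document; each statement's English description precedes it below -/
import Mathlib

section
/- Let x, y, v, ε, γ be real numbers with 0 < γ < ε, and suppose g is the projection of x onto the interval [y-ε, y+ε] (i.e., g = x if |x-y| ≤ ε, g = y+ε if x > y+ε, and g = y-ε if x < y-ε). Then for every v with |v - y| ≤ γ, we have 2(ε-γ)·|g - x| ≤ (x - v)² - (g - v)². -/
theorem stmt_0 (x y v ε γ g : ℝ) (hγ : 0 < γ) (hγε : γ < ε)
    (hg1 : |x - y| ≤ ε → g = x)
    (hg2 : x > y + ε → g = y + ε)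
    (hg3 : x < y - ε → g = y - ε)
    (hv : |v - y| ≤ γ) :
    2 * (ε - γ) * |g - x| ≤ (x - v) ^ 2 - (g - v) ^ 2 := by
  rw [abs_le] at hv
  rcases le_or_gt (|x - y|) ε with h | h
  · rw [hg1 h]; simp
  · rcases lt_abs.mp h with h' | h'
    · have hx : x > y + ε := by linarith
      rw [hg2 hx]
      have : |y + ε - x| = x - (y + ε) := by rw [abs_sub_comm]; apply abs_of_nonneg; linarith
      rw [this]; nlinarith [sq_nonneg (x - (y+ε))]
    · have hx : x < y - ε := by linarith
      rw [hg3 hx]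
      have : |y - ε - x| = y - ε - x := abs_of_nonneg (by linarith)
      rw [this]; nlinarith [sq_nonneg (x - (y-ε))]
end

section
/- Let G = (V,E) be a finite connected graph, i₀ ∈ V, and c ∈ ℝ. Define the dynamics B_{i,t} by: B_{i₀,t} = c for all t, B_{i,0} arbitrary for i ≠ i₀, and for t > 0 and i ≠ i₀, B_{i,t} = (1/|N_i|) ∑_{j ∈ N_i} B_{j,t-1}. Then for every i ∈ V, lim_{t→∞} B_{i,t} = c. -/
/-!
Let `M t` be the sup norm of `B t - c`. Averaging never increases it, and an agent with a
neighbour within `(1 - δ) M` of `c` moves to within `(1 - δ / deg) M ≤ (1 - δ / n) M` of `c`,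
where `n = |V|`. Propagating this outwards from the bot along shortest paths, after `n` steps every
agent is within `(1 - n⁻ⁿ) M` of `c`; hence the limit `L` of the monotone sequence `M` satisfies
`L ≤ (1 - n⁻ⁿ) L`, so `L = 0`.
-/

open Finset Filter Topology

lemma Finset.abs_sum_le_card_mul_sub {ι : Type*} {s : Finset ι} {f : ι → ℝ} {C a : ℝ} {j₀ : ι}
    (hj₀ : j₀ ∈ s) (hf : ∀ j ∈ s, |f j| ≤ C) (hfj₀ : |f j₀| ≤ C - a) :
    |∑ j ∈ s, f j| ≤ #s * C - a := by
  have hgap : C - |f j₀| ≤ ∑ j ∈ s, (C - |f j|) :=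
    single_le_sum (f := fun j => C - |f j|) (fun j hj => sub_nonneg.2 (hf j hj)) hj₀
  rw [sum_sub_distrib, sum_const, nsmul_eq_mul] at hgap
  linarith [abs_sum_le_sum_abs f s]

lemma tendsto_zero_of_antitone_of_le_mul_add {M : ℕ → ℝ} {q : ℝ} {n : ℕ} (hM : Antitone M)
    (hM₀ : ∀ t, 0 ≤ M t) (hq : q < 1) (hcontr : ∀ s, M (s + n) ≤ q * M s) :
    Tendsto M atTop (𝓝 0) := by
  have hL := tendsto_atTop_ciInf hM ⟨0, Set.forall_mem_range.2 hM₀⟩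
  have hL₀ : 0 ≤ ⨅ t, M t := le_ciInf hM₀
  have hLq : ⨅ t, M t ≤ q * ⨅ t, M t :=
    le_of_tendsto_of_tendsto' ((tendsto_add_atTop_iff_nat n).2 hL) (hL.const_mul q) hcontr
  have hL0 : ⨅ t, M t = 0 := by nlinarith
  rwa [hL0] at hL

lemma abs_sub_le_norm_sub_const {V : Type*} [Fintype V] (x : V → ℝ) (c : ℝ) (i : V) :
    |x i - c| ≤ ‖x - Function.const V c‖ :=
  norm_le_pi_norm (x - Function.const V c) i

namespace SimpleGraph

lemma Reachable.exists_adj_dist_lt {V : Type*} {G : SimpleGraph V} {u v : V}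
    (h : G.Reachable u v) (huv : u ≠ v) : ∃ w, G.Adj v w ∧ G.dist u w < G.dist u v := by
  obtain ⟨p, hp⟩ := h.symm.exists_walk_length_eq_dist
  cases p with
  | nil => exact absurd rfl huv
  | cons hadj q =>
    refine ⟨_, hadj, ?_⟩
    rw [dist_comm, dist_comm (u := u), ← hp, Walk.length_cons]
    exact Nat.lt_succ_of_le (dist_le q)

variable {V : Type*} [Fintype V]

structure IsDeGrootWithBot (G : SimpleGraph V) [DecidableRel G.Adj] (i₀ : V) (c : ℝ)
    (B : ℕ → V → ℝ) : Prop where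
  bot : ∀ t, B t i₀ = c
  update : ∀ t i, i ≠ i₀ → B (t + 1) i = (∑ j ∈ G.neighborFinset i, B t j) / G.degree i

namespace IsDeGrootWithBot

variable {G : SimpleGraph V} [DecidableRel G.Adj] {i₀ : V} {c : ℝ} {B : ℕ → V → ℝ}

lemma abs_sub_succ_le (hB : G.IsDeGrootWithBot i₀ c B) {t : ℕ} {i j₀ : V} (hi : i ≠ i₀)
    (hadj : G.Adj i j₀) {C a : ℝ} (hC : ∀ j, |B t j - c| ≤ C) (hj₀ : |B t j₀ - c| ≤ C - a) :
    |B (t + 1) i - c| ≤ C - a / G.degree i := by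
  have hdeg : (0 : ℝ) < G.degree i := by
    exact_mod_cast (G.degree_pos_iff_exists_adj i).2 ⟨j₀, hadj⟩
  have hsum := abs_sum_le_card_mul_sub (f := fun j => B t j - c)
    ((G.mem_neighborFinset i j₀).2 hadj) (fun j _ => hC j) hj₀
  rw [card_neighborFinset_eq_degree] at hsum
  have hdev : (∑ j ∈ G.neighborFinset i, B t j) / G.degree i - c
      = (∑ j ∈ G.neighborFinset i, (B t j - c)) / G.degree i := by
    rw [sum_sub_distrib, sum_const, card_neighborFinset_eq_degree, nsmul_eq_mul]
    field_simp
  rw [hB.update t i hi, hdev, abs_div, abs_of_pos hdeg, div_le_iff₀ hdeg, sub_mul,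
    div_mul_cancel₀ _ hdeg.ne']
  linarith

lemma antitone_norm_sub_const (hB : G.IsDeGrootWithBot i₀ c B) (hG : G.Connected) :
    Antitone fun t => ‖B t - Function.const V c‖ := by
  refine antitone_nat_of_succ_le fun t => (pi_norm_le_iff_of_nonneg (norm_nonneg _)).2 fun i => ?_
  have hC := abs_sub_le_norm_sub_const (B t) c
  rw [Pi.sub_apply, Function.const_apply, Real.norm_eq_abs]
  by_cases hi : i = i₀
  · simp [hi, hB.bot]
  · obtain ⟨j, hj, -⟩ := (hG.preconnected i₀ i).exists_adj_dist_lt (Ne.symm hi)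
    simpa using hB.abs_sub_succ_le hi hj hC (a := 0) (by simpa using hC j)

lemma abs_sub_le_of_dist_le (hB : G.IsDeGrootWithBot i₀ c B) (hG : G.Connected) (s k : ℕ) :
    ∀ t i, G.dist i₀ i ≤ k → s + k ≤ t →
      |B t i - c| ≤ (1 - (Fintype.card V : ℝ)⁻¹ ^ k) * ‖B s - Function.const V c‖ := by
  set δ := (Fintype.card V : ℝ)⁻¹
  set M := ‖B s - Function.const V c‖
  have hδ₀ : 0 ≤ δ := by positivity
  have hδ₁ : δ ≤ 1 := Nat.cast_inv_le_one _
  have hM₀ : 0 ≤ M := norm_nonneg _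
  induction k with
  | zero =>
    intro t i hi _
    obtain rfl := hG.dist_eq_zero_iff.1 (Nat.le_zero.1 hi)
    simp [hB.bot]
  | succ k ih =>
    intro t i hdist hst
    by_cases hi : i = i₀
    · subst hi
      simp only [hB.bot, sub_self, abs_zero]
      exact mul_nonneg (sub_nonneg.2 (pow_le_one₀ hδ₀ hδ₁)) hM₀
    obtain ⟨j, hj, hji⟩ := (hG.preconnected i₀ i).exists_adj_dist_lt (Ne.symm hi)
    obtain ⟨u, rfl⟩ : ∃ u, t = u + 1 := ⟨t - 1, by omega⟩
    have hC (j : V) : |B u j - c| ≤ M :=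
      (abs_sub_le_norm_sub_const (B u) c j).trans
        (hB.antitone_norm_sub_const hG (by omega : s ≤ u))
    have hstep := hB.abs_sub_succ_le hi hj hC (a := δ ^ k * M)
      (by linarith [ih u j (by omega) (by omega)])
    have hdeg₀ : (0 : ℝ) < G.degree i := by
      exact_mod_cast (G.degree_pos_iff_exists_adj i).2 ⟨j, hj⟩
    have hδdeg : δ ≤ (G.degree i : ℝ)⁻¹ :=
      inv_anti₀ hdeg₀ (by exact_mod_cast (G.degree_lt_card_verts i).le)
    calc |B (u + 1) i - c| ≤ M - δ ^ k * M / G.degree i := hstep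
      _ ≤ M - δ ^ k * M * δ := by
        rw [div_eq_mul_inv]; gcongr
      _ = (1 - δ ^ (k + 1)) * M := by ring

lemma norm_sub_const_add_card_le (hB : G.IsDeGrootWithBot i₀ c B) (hG : G.Connected) (s : ℕ) :
    ‖B (s + Fintype.card V) - Function.const V c‖
      ≤ (1 - (Fintype.card V : ℝ)⁻¹ ^ Fintype.card V) * ‖B s - Function.const V c‖ := by
  refine (pi_norm_le_iff_of_nonneg (mul_nonneg (sub_nonneg.2 (pow_le_one₀ (by positivity)
    (Nat.cast_inv_le_one _))) (norm_nonneg _))).2 fun i => ?_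
  obtain ⟨p, hp, hlen⟩ := hG.exists_path_of_dist i₀ i
  exact hB.abs_sub_le_of_dist_le hG s _ _ i (hlen ▸ hp.length_lt.le) le_rfl

lemma tendsto_const_opinion (hB : G.IsDeGrootWithBot i₀ c B) (hG : G.Connected) :
    Tendsto B atTop (𝓝 (Function.const V c)) := by
  have hcard : (0 : ℝ) < Fintype.card V := by exact_mod_cast Fintype.card_pos_iff.2 ⟨i₀⟩
  rw [tendsto_iff_norm_sub_tendsto_zero]
  refine tendsto_zero_of_antitone_of_le_mul_add (hB.antitone_norm_sub_const hG)
    (fun _ => norm_nonneg _) ?_ (hB.norm_sub_const_add_card_le hG)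
  have : 0 < (Fintype.card V : ℝ)⁻¹ ^ Fintype.card V := by positivity
  linarith

end IsDeGrootWithBot

end SimpleGraph

theorem stmt_14_general {V : Type*} [Fintype V]
    (G : SimpleGraph V) [DecidableRel G.Adj] (hconn : G.Connected)
    (i₀ : V) (c : ℝ) (B : ℕ → V → ℝ)
    (hbot : ∀ t : ℕ, B t i₀ = c)
    (hupd : ∀ t : ℕ, ∀ i : V, i ≠ i₀ →
      B (t + 1) i = (∑ j ∈ G.neighborFinset i, B t j) / (G.degree i)) :
    ∀ i : V, Filter.Tendsto (fun t : ℕ => B t i) Filter.atTop (nhds c) :=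
  tendsto_pi_nhds.1 (SimpleGraph.IsDeGrootWithBot.tendsto_const_opinion ⟨hbot, hupd⟩ hconn)

theorem stmt_14 {V : Type*} [Fintype V] [DecidableEq V] [Nonempty V]
    (G : SimpleGraph V) [DecidableRel G.Adj] (hconn : G.Connected)
    (i₀ : V) (c : ℝ) (B : ℕ → V → ℝ)
    (hbot : ∀ t : ℕ, B t i₀ = c)
    (hupd : ∀ t : ℕ, ∀ i : V, i ≠ i₀ →
      B (t + 1) i = (∑ j ∈ G.neighborFinset i, B t j) / (G.degree i)) :
    ∀ i : V, Filter.Tendsto (fun t : ℕ => B t i) Filter.atTop (nhds c) :=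
  stmt_14_general G hconn i₀ c B hbot hupd
end
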